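/- Let r ≥ 1 and k ≥ 1 be integers, let n ≥ (r+1)k, and let A, B ⊆ \binom{[n]}{k} be cross-intersecting families with |A| ≤ |B|. Then r·|A| + |B| ≤ \binom{n}{k}. -/

import Mathlib

/-!
Every `k`-subset of the complement of a member of `A` misses that member, hence is not in `B`:
the `(n - 2k)`-fold shadow `𝒮` of the complements of `A` is a family of `k`-sets disjoint from
`B`, so `|B| + |𝒮| ≤ C(n, k)`. If `|A| ≤ C(n-1, k-1)`, Kruskal–Katona lets us replace the
complements by a colex initial segment, which avoids the largest point; the local LYM inequality
on the remaining `n - 1` points then gives `|𝒮| ≥ (n - k) / k · |A| ≥ r |A|`. Otherwise the Lovász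
form of Kruskal–Katona gives `|𝒮| ≥ C(n-1, k)`, so `|A| ≤ |B| ≤ C(n-1, k-1)`, and
`r C(n-1, k-1) ≤ C(n-1, k)` because `(r + 1) k ≤ n`.
-/

open Finset
open scoped FinsetFamily

namespace Finset

variable {α β : Type*}

section Transport

variable (f : α ↪ β)

lemma shadow_map_mapEmbedding [DecidableEq α] [DecidableEq β] (𝒜 : Finset (Finset α)) :
    ∂ (𝒜.map (mapEmbedding f).toEmbedding) = (∂ 𝒜).map (mapEmbedding f).toEmbedding := by
  ext t
  simp only [mem_shadow_iff, mem_map, RelEmbedding.coe_toEmbedding, mapEmbedding_apply]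
  constructor
  · rintro ⟨_, ⟨s, hs, rfl⟩, b, hb, rfl⟩
    obtain ⟨a, ha, rfl⟩ := mem_map.1 hb
    exact ⟨s.erase a, ⟨s, hs, a, ha, rfl⟩, map_erase f s a⟩
  · rintro ⟨_, ⟨s, hs, a, ha, rfl⟩, rfl⟩
    exact ⟨s.map f, ⟨s, hs, rfl⟩, f a, mem_map_of_mem f ha, (map_erase f s a).symm⟩

lemma shadow_iterate_map_mapEmbedding [DecidableEq α] [DecidableEq β] (𝒜 : Finset (Finset α))
    (i : ℕ) :
    ∂^[i] (𝒜.map (mapEmbedding f).toEmbedding) = (∂^[i] 𝒜).map (mapEmbedding f).toEmbedding :=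
  (Function.Semiconj.iterate_right (fun 𝒜 ↦ (shadow_map_mapEmbedding f 𝒜).symm) i 𝒜).symm

lemma sized_map_mapEmbedding_iff {𝒜 : Finset (Finset α)} {r : ℕ} :
    (↑(𝒜.map (mapEmbedding f).toEmbedding) : Set (Finset β)).Sized r ↔
      (𝒜 : Set (Finset α)).Sized r := by
  simp [Set.Sized]

lemma exists_map_mapEmbedding_eq [Fintype α] {𝒜 : Finset (Finset β)}
    (h : ∀ s ∈ 𝒜, ↑s ⊆ Set.range f) :
    ∃ 𝒜' : Finset (Finset α), 𝒜'.map (mapEmbedding f).toEmbedding = 𝒜 := by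
  have hmap : 𝒜 ⊆ univ.map (mapEmbedding f).toEmbedding := fun s hs ↦ by
    have hs' : s ⊆ univ.map f := by
      rw [← coe_subset, coe_map, coe_univ, Set.image_univ]; exact h s hs
    obtain ⟨u, -, rfl⟩ := subset_map_iff.1 hs'
    exact mem_map_of_mem _ (mem_univ u)
  obtain ⟨𝒜', -, rfl⟩ := subset_map_iff.1 hmap
  exact ⟨𝒜', rfl⟩

end Transport

section LYM

variable {𝕜 : Type*} [Semifield 𝕜] [LinearOrder 𝕜] [IsStrictOrderedRing 𝕜] [DecidableEq α]
  {𝒜 : Finset (Finset α)} {r i : ℕ}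

lemma card_div_choose_le_card_shadow_iterate_div_choose [Fintype α]
    (h𝒜 : (𝒜 : Set (Finset α)).Sized r) (hi : i ≤ r) :
    (#𝒜 : 𝕜) / (Fintype.card α).choose r ≤ #(∂^[i] 𝒜) / (Fintype.card α).choose (r - i) := by
  induction i generalizing r 𝒜 with
  | zero => simp
  | succ i ih =>
    rw [Function.iterate_succ_apply, show r - (i + 1) = r - 1 - i by omega]
    exact (card_div_choose_le_card_shadow_div_choose (by omega) h𝒜).trans
      (ih h𝒜.shadow (by omega))

lemma card_div_choose_le_card_shadow_iterate_div_choose_of_subset {U : Finset α}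
    (h𝒜 : (𝒜 : Set (Finset α)).Sized r) (hU : ∀ s ∈ 𝒜, s ⊆ U) (hi : i ≤ r) :
    (#𝒜 : 𝕜) / (#U).choose r ≤ #(∂^[i] 𝒜) / (#U).choose (r - i) := by
  obtain ⟨𝒜, rfl⟩ := exists_map_mapEmbedding_eq (Function.Embedding.subtype (· ∈ U))
    fun s hs ↦ by simpa using hU s hs
  rw [shadow_iterate_map_mapEmbedding, card_map, card_map, ← Fintype.card_coe U]
  exact card_div_choose_le_card_shadow_iterate_div_choose
    ((sized_map_mapEmbedding_iff _).1 h𝒜) hi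

end LYM

namespace Colex

variable [LinearOrder α] [Fintype α] {𝒞 : Finset (Finset α)} {r : ℕ}

lemma exists_isInitSeg_card_eq {m : ℕ} (hm : m ≤ (Fintype.card α).choose r) :
    ∃ 𝒞 : Finset (Finset α), IsInitSeg 𝒞 r ∧ #𝒞 = m := by
  induction m with
  | zero => exact ⟨∅, isInitSeg_empty, rfl⟩
  | succ m ih =>
    obtain ⟨𝒞, h𝒞, rfl⟩ := ih (by omega)
    have h𝒞sub : 𝒞 ⊆ powersetCard r univ := fun s hs ↦
      mem_powersetCard.2 ⟨subset_univ s, h𝒞.1 hs⟩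
    have hne : (powersetCard r univ \ 𝒞).Nonempty := by
      rw [← card_pos, card_sdiff_of_subset h𝒞sub, card_powersetCard, card_univ]; omega
    obtain ⟨s, hs, hmin⟩ := (powersetCard r univ \ 𝒞).exists_min_image toColex hne
    obtain ⟨hsr, hs𝒞⟩ := mem_sdiff.1 hs
    refine ⟨insert s 𝒞, ⟨?_, ?_⟩, card_insert_of_notMem hs𝒞⟩
    · intro u hu
      obtain rfl | hu := mem_insert.1 hu
      exacts [(mem_powersetCard.1 hsr).2, h𝒞.1 hu]
    · rintro u t hu ⟨htu, htr⟩
      refine mem_insert_of_mem ?_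
      obtain rfl | hu := mem_insert.1 hu
      · by_contra ht𝒞
        have := hmin t (mem_sdiff.2 ⟨mem_powersetCard.2 ⟨subset_univ t, htr⟩, ht𝒞⟩)
        exact not_le_of_gt htu this
      · exact h𝒞.2 hu ⟨htu, htr⟩

/-- Every `r`-set avoiding `⊤` precedes in colex any set containing `⊤`. -/
lemma IsInitSeg.subset_erase_top [OrderTop α] (h𝒞 : IsInitSeg 𝒞 r)
    (hcard : #𝒞 ≤ (Fintype.card α - 1).choose r) : ∀ s ∈ 𝒞, s ⊆ univ.erase ⊤ := by
  intro s hs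
  by_contra hs_top
  have htop : ⊤ ∈ s := by
    by_contra h; exact hs_top fun a ha ↦ mem_erase.2 ⟨fun hat ↦ h (hat ▸ ha), mem_univ a⟩
  have hlow : powersetCard r (univ.erase ⊤) ⊆ 𝒞 := fun t ht ↦ by
    obtain ⟨htU, htr⟩ := mem_powersetCard.1 ht
    refine h𝒞.2 hs ⟨toColex_lt_toColex_iff_exists_forall_lt.2 ⟨⊤, htop, ?_, ?_⟩, htr⟩
    · exact fun h ↦ (mem_erase.1 (htU h)).1 rfl
    · exact fun b hb _ ↦ lt_top_iff_ne_top.2 (mem_erase.1 (htU hb)).1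
  have hs_low : s ∉ powersetCard r (univ.erase ⊤) := fun h ↦ hs_top (mem_powersetCard.1 h).1
  have := card_le_card (insert_subset hs hlow)
  rw [card_insert_of_notMem hs_low, card_powersetCard, card_erase_of_mem (mem_univ _),
    card_univ] at this
  omega

end Colex

section CrossIntersecting

variable [DecidableEq α] [Fintype α]

lemma disjoint_shadow_iterate_compls {𝒜 ℬ : Finset (Finset α)}
    (hcross : ∀ s ∈ 𝒜, ∀ t ∈ ℬ, (s ∩ t).Nonempty) (i : ℕ) : Disjoint ℬ (∂^[i] 𝒜ᶜˢ) := by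
  rw [disjoint_right]
  intro t ht htℬ
  obtain ⟨c, hc, htc, -⟩ := mem_shadow_iterate_iff_exists_sdiff.1 ht
  obtain ⟨x, hx⟩ := hcross _ (mem_compls.1 hc) _ htℬ
  rw [mem_inter, mem_compl] at hx
  exact hx.1 (htc hx.2)

end CrossIntersecting

theorem card_div_choose_le_card_shadow_iterate_div_choose_of_card_le
    {𝕜 : Type*} [Semifield 𝕜] [LinearOrder 𝕜] [IsStrictOrderedRing 𝕜] {m r i : ℕ}
    {𝒜 : Finset (Finset (Fin (m + 1)))} (h𝒜 : (𝒜 : Set (Finset (Fin (m + 1)))).Sized r)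
    (hsmall : #𝒜 ≤ m.choose r) (hi : i ≤ r) :
    (#𝒜 : 𝕜) / m.choose r ≤ #(∂^[i] 𝒜) / m.choose (r - i) := by
  obtain ⟨𝒞, h𝒞, h𝒞card⟩ := Colex.exists_isInitSeg_card_eq (α := Fin (m + 1)) h𝒜.card_le
  have hU : ∀ s ∈ 𝒞, s ⊆ univ.erase ⊤ :=
    h𝒞.subset_erase_top (by simpa [h𝒞card] using hsmall)
  have hcardU : #(univ.erase (⊤ : Fin (m + 1))) = m := by simp
  calc (#𝒜 : 𝕜) / m.choose r = #𝒞 / m.choose r := by rw [h𝒞card]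
    _ ≤ #(∂^[i] 𝒞) / m.choose (r - i) := by
      simpa only [hcardU] using
        card_div_choose_le_card_shadow_iterate_div_choose_of_subset h𝒞.1 hU hi
    _ ≤ #(∂^[i] 𝒜) / m.choose (r - i) := by
      gcongr ?_ / _
      exact_mod_cast iterated_kk h𝒜 h𝒞card.le h𝒞

end Finset

lemma Nat.mul_choose_pred_le_choose {m k r : ℕ} (hk : 1 ≤ k) (h : r * k ≤ m + 1 - k) :
    r * m.choose (k - 1) ≤ m.choose k := by
  have hsucc := Nat.choose_succ_right_eq m (k - 1)
  rw [Nat.sub_add_cancel hk] at hsucc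
  refine Nat.le_of_mul_le_mul_right ?_ (show 0 < k by omega)
  calc r * m.choose (k - 1) * k = m.choose (k - 1) * (r * k) := by ring
    _ ≤ m.choose (k - 1) * (m - (k - 1)) := Nat.mul_le_mul_left _ (by omega)
    _ = m.choose k * k := hsucc.symm

theorem mul_card_le_or_choose_le_card_shadow_iterate_compls {m k r : ℕ} (hk : 1 ≤ k)
    (h2k : 2 * k ≤ m + 1)
    {𝒜 : Finset (Finset (Fin (m + 1)))} (h𝒜 : (𝒜 : Set (Finset (Fin (m + 1)))).Sized k)
    (hchoose : r * m.choose (k - 1) ≤ m.choose k) :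
    r * #𝒜 ≤ #(∂^[m + 1 - 2 * k] 𝒜ᶜˢ) ∨ m.choose k ≤ #(∂^[m + 1 - 2 * k] 𝒜ᶜˢ) := by
  have h𝒟 : (𝒜ᶜˢ : Set (Finset (Fin (m + 1)))).Sized (m + 1 - k) := by
    simpa using h𝒜.compls
  have hsymm : m.choose (m + 1 - k) = m.choose (k - 1) := Nat.choose_symm_of_eq_add (by omega)
  have hlevel : m + 1 - k - (m + 1 - 2 * k) = k := by omega
  by_cases hsmall : #𝒜 ≤ m.choose (k - 1)
  · left
    have hratio := card_div_choose_le_card_shadow_iterate_div_choose_of_card_le (𝕜 := ℚ)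
      (i := m + 1 - 2 * k) h𝒟 (by rwa [card_compls, hsymm]) (by omega)
    rw [card_compls, hsymm, hlevel, div_le_div_iff₀ (by exact_mod_cast Nat.choose_pos (by omega))
      (by exact_mod_cast Nat.choose_pos (by omega))] at hratio
    have hratio' : #𝒜 * m.choose k ≤ #(∂^[m + 1 - 2 * k] 𝒜ᶜˢ) * m.choose (k - 1) := by
      exact_mod_cast hratio
    refine Nat.le_of_mul_le_mul_right ?_ (Nat.choose_pos (show k - 1 ≤ m by omega))
    calc r * #𝒜 * m.choose (k - 1) = #𝒜 * (r * m.choose (k - 1)) := by ring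
      _ ≤ #𝒜 * m.choose k := Nat.mul_le_mul_left _ hchoose
      _ ≤ _ := hratio'
  · right
    have := kruskal_katona_lovasz_form (i := m + 1 - 2 * k) (by omega) (by omega)
      (Nat.le_succ m) h𝒟 (by rw [card_compls, hsymm]; omega)
    rwa [hlevel] at this

theorem mul_card_add_card_le_choose_of_crossIntersecting {m k r : ℕ} (hr : 1 ≤ r) (hk : 1 ≤ k)
    (hn : (r + 1) * k ≤ m + 1) {𝒜 ℬ : Finset (Finset (Fin (m + 1)))}
    (h𝒜 : (𝒜 : Set (Finset (Fin (m + 1)))).Sized k)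
    (hℬ : (ℬ : Set (Finset (Fin (m + 1)))).Sized k)
    (hcross : ∀ s ∈ 𝒜, ∀ t ∈ ℬ, (s ∩ t).Nonempty) (h𝒜ℬ : #𝒜 ≤ #ℬ) :
    r * #𝒜 + #ℬ ≤ (m + 1).choose k := by
  have hrk : r * k ≤ m + 1 - k := by rw [add_mul, one_mul] at hn; omega
  have h2k : 2 * k ≤ m + 1 := by nlinarith
  set 𝒮 := ∂^[m + 1 - 2 * k] 𝒜ᶜˢ
  have h𝒮 : (𝒮 : Set (Finset (Fin (m + 1)))).Sized k := by
    convert h𝒜.compls.shadow_iterate using 1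
    simp only [Fintype.card_fin]
    omega
  have hℬ𝒮 : #ℬ + #𝒮 ≤ (m + 1).choose k := by
    rw [← card_union_of_disjoint (disjoint_shadow_iterate_compls hcross _)]
    simpa using Set.Sized.card_le (𝒜 := ℬ ∪ 𝒮)
      (by rw [coe_union]; exact Set.sized_union.2 ⟨hℬ, h𝒮⟩)
  have hpascal : (m + 1).choose k = m.choose (k - 1) + m.choose k := by
    obtain ⟨k, rfl⟩ := Nat.exists_eq_add_of_le' hk
    exact Nat.choose_succ_succ' m k
  have hchoose : r * m.choose (k - 1) ≤ m.choose k := Nat.mul_choose_pred_le_choose hk hrk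
  obtain h𝒮 | h𝒮 : r * #𝒜 ≤ #𝒮 ∨ m.choose k ≤ #𝒮 :=
    mul_card_le_or_choose_le_card_shadow_iterate_compls hk h2k h𝒜 hchoose
  · omega
  · have h𝒜small : #𝒜 ≤ m.choose (k - 1) := by omega
    have := Nat.mul_le_mul_left r h𝒜small
    omega

theorem stmt_14 (n k r : ℕ) (hr : 1 ≤ r) (hk : 1 ≤ k) (hn : (r + 1) * k ≤ n)
    (A B : Finset (Finset ℕ))
    (hA : A ⊆ Finset.powersetCard k (Finset.Icc 1 n))
    (hB : B ⊆ Finset.powersetCard k (Finset.Icc 1 n))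
    (hcross : ∀ s ∈ A, ∀ t ∈ B, (s ∩ t).Nonempty)
    (hAB : A.card ≤ B.card) :
    r * A.card + B.card ≤ n.choose k := by
  obtain ⟨m, rfl⟩ : ∃ m, n = m + 1 := ⟨n - 1, by
    have := Nat.mul_le_mul_right k (show 2 ≤ r + 1 by omega); omega⟩
  set f := (Icc 1 (m + 1)).orderEmbOfFin (k := m + 1) (by simp)
  have hrange : ∀ 𝒜 ⊆ powersetCard k (Icc 1 (m + 1)), ∀ s ∈ 𝒜, ↑s ⊆ Set.range f := by
    intro 𝒜 h𝒜 s hs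
    rw [range_orderEmbOfFin, coe_subset]
    exact (mem_powersetCard.1 (h𝒜 hs)).1
  obtain ⟨𝒜, rfl⟩ := exists_map_mapEmbedding_eq f.toEmbedding (hrange A hA)
  obtain ⟨ℬ, rfl⟩ := exists_map_mapEmbedding_eq f.toEmbedding (hrange B hB)
  simp only [card_map] at hAB ⊢
  refine mul_card_add_card_le_choose_of_crossIntersecting hr hk hn ?_ ?_ ?_ hAB
  · exact (sized_map_mapEmbedding_iff _).1 fun s hs ↦ (mem_powersetCard.1 (hA hs)).2
  · exact (sized_map_mapEmbedding_iff _).1 fun s hs ↦ (mem_powersetCard.1 (hB hs)).2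
  · intro s hs t ht
    simpa [← map_inter] using hcross _ (mem_map_of_mem _ hs) _ (mem_map_of_mem _ ht)
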